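/- Let J : ℝ^n → ℝ be convex and absolutely one-homogeneous satisfying (PS), i.e. ∂J(0) is the convex hull of a finite set. Let f ∈ ℝ^n and let q₀ ∈ ∂J(0). The set C = {v ∈ ℝ^n : q₀ ∈ ∂J(v)} is nonempty, closed and convex; let v̂ be the unique element of C closest to f. Then there exists δ > 0 such that q₀ + s·(f − v̂) ∈ ∂J(v̂) for all s ∈ [0, δ]. (This is the key step showing the inverse scale space flow of J is piecewise linear in the dual variable and piecewise constant in the primal variable.) -/

import Mathlib

/-!
Under (PS), `C = {v | q₀ ∈ ∂J(v)}` is the polyhedral cone `{v | ⟪p - q₀, v⟫ ≤ 0 for p ∈ F}`,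
because by Hahn–Banach `J v` is attained as `⟪p, v⟫` for some `p ∈ ∂J(0) = conv F`. As `C` is a
closed convex cone, the residual `w = f - v̂` of the projection is orthogonal to `v̂` and lies in
the polar cone of `C`, which by Farkas' lemma is the cone generated by the `p - q₀` (finitely
generated cones are closed, by the conic Carathéodory theorem). Writing `w = ∑ λ_p (p - q₀)` gives
`⟪w, v⟫ ≤ Λ (J v - ⟪q₀, v⟫)` with `Λ = ∑ λ_p`, so `q₀ + s w ∈ ∂J(0)` for `0 ≤ s ≤ 1 / (Λ + 1)`,
and orthogonality upgrades this to `q₀ + s w ∈ ∂J(v̂)`.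
-/

open RealInnerProductSpace

/-- The subdifferential of `J` at `u`:
`∂J(u) = {p | ∀ v, J v ≥ J u + ⟪p, v - u⟫}`. -/
def subdiff {n : ℕ} (J : EuclideanSpace ℝ (Fin n) → ℝ)
    (u : EuclideanSpace ℝ (Fin n)) : Set (EuclideanSpace ℝ (Fin n)) :=
  {p | ∀ v, J u + ⟪p, v - u⟫ ≤ J v}

lemma exists_sub_mul_eq_zero_and_nonneg {ι : Type*} {s : Finset ι} {c g : ι → ℝ}
    (hc : ∀ i ∈ s, 0 ≤ c i) (hg : ∃ i ∈ s, g i ≠ 0) :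
    ∃ t : ℝ, ∃ j ∈ s, c j - t * g j = 0 ∧ ∀ i ∈ s, 0 ≤ c i - t * g i := by
  classical
  wlog hpos : ∃ i ∈ s, 0 < g i generalizing g
  · obtain ⟨i, hi, hgi⟩ := hg
    have hneg : 0 < -g i := neg_pos.2 <| hgi.lt_of_le <| not_lt.1 fun h => hpos ⟨i, hi, h⟩
    obtain ⟨t, j, hj, hcj, hct⟩ := this (g := -g) ⟨i, hi, by simpa using hgi⟩ ⟨i, hi, hneg⟩
    exact ⟨-t, j, hj, by simpa using hcj, fun i hi => by simpa using hct i hi⟩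
  obtain ⟨j, hjT, hjmin⟩ := (s.filter (0 < g ·)).exists_min_image (fun i => c i / g i)
    (by simpa [Finset.Nonempty] using hpos)
  rw [Finset.mem_filter] at hjT
  refine ⟨c j / g j, j, hjT.1, by field_simp [hjT.2.ne']; ring, fun i hi => ?_⟩
  rcases lt_or_ge 0 (g i) with hgi | hgi
  · have := hjmin i (Finset.mem_filter.2 ⟨hi, hgi⟩)
    rw [le_div_iff₀ hgi] at this
    linarith
  · nlinarith [hc i hi, hc j hjT.1, div_nonneg (hc j hjT.1) hjT.2.le]

namespace PointedCone

section Module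

variable {E : Type*} [AddCommGroup E] [Module ℝ E] {x : E}

lemma mem_hull_finset_iff {s : Finset E} :
    x ∈ hull ℝ (s : Set E) ↔ ∃ c : E → ℝ, (∀ y ∈ s, 0 ≤ c y) ∧ ∑ y ∈ s, c y • y = x := by
  constructor
  · intro hx
    obtain ⟨c, -, rfl⟩ := Submodule.mem_span_finset.1 hx
    exact ⟨fun y => c y, fun y _ => (c y).2, rfl⟩
  · rintro ⟨c, hc, rfl⟩
    refine Submodule.sum_mem _ fun y hy => ?_
    exact Submodule.smul_mem _ (⟨c y, hc y hy⟩ : NNReal) (subset_hull hy)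

lemma exists_mem_hull_erase [DecidableEq E] {s : Finset E}
    (hs : ¬LinearIndepOn ℝ id (s : Set E)) (hx : x ∈ hull ℝ (s : Set E)) :
    ∃ j ∈ s, x ∈ hull ℝ (s.erase j : Set E) := by
  obtain ⟨c, hc, rfl⟩ := mem_hull_finset_iff.1 hx
  obtain ⟨g, hg, hg0⟩ := not_linearIndepOn_finset_iff.1 hs
  obtain ⟨t, j, hj, hcj, hct⟩ := exists_sub_mul_eq_zero_and_nonneg hc hg0
  refine ⟨j, hj, mem_hull_finset_iff.2
    ⟨fun i => c i - t * g i, fun i hi => hct i (Finset.mem_of_mem_erase hi), ?_⟩⟩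
  rw [Finset.sum_erase s (f := fun y => (c y - t * g y) • y) (by simp [hcj])]
  simp only [id, sub_smul, mul_smul, Finset.sum_sub_distrib, ← Finset.smul_sum] at hg ⊢
  rw [hg, smul_zero, sub_zero]

lemma exists_linearIndepOn_subset_mem_hull (s : Finset E) (hx : x ∈ hull ℝ (s : Set E)) :
    ∃ t ⊆ s, LinearIndepOn ℝ id (t : Set E) ∧ x ∈ hull ℝ (t : Set E) := by
  classical
  induction s using Finset.strongInduction with
  | _ s ih =>
    by_cases hs : LinearIndepOn ℝ id (s : Set E)
    · exact ⟨s, subset_rfl, hs, hx⟩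
    · obtain ⟨j, hj, hxj⟩ := exists_mem_hull_erase hs hx
      obtain ⟨t, hts, ht, hxt⟩ := ih _ (Finset.erase_ssubset hj) hxj
      exact ⟨t, hts.trans (Finset.erase_subset j s), ht, hxt⟩

variable [TopologicalSpace E] [IsTopologicalAddGroup E] [ContinuousSMul ℝ E] [T2Space E]

lemma isClosed_hull_of_linearIndepOn {t : Finset E} (ht : LinearIndepOn ℝ id (t : Set E)) :
    IsClosed (hull ℝ (t : Set E) : Set E) := by
  let L := Fintype.linearCombination ℝ (fun y : t => (y : E))
  have hL : LinearMap.ker L = ⊥ := LinearMap.ker_eq_bot.2 ht.fintypeLinearCombination_injective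
  have himage : (hull ℝ (t : Set E) : Set E) = L '' Set.Ici 0 := by
    ext x
    constructor
    · intro hx
      obtain ⟨c, hc, rfl⟩ := mem_hull_finset_iff.1 hx
      refine ⟨fun y => c y, fun y => hc y y.2, ?_⟩
      simp [L, Fintype.linearCombination_apply, Finset.sum_attach t (fun y => c y • y)]
    · rintro ⟨g, hg, rfl⟩
      rw [SetLike.mem_coe, Fintype.linearCombination_apply]
      exact Submodule.sum_mem _ fun y _ =>
        Submodule.smul_mem _ (⟨g y, hg y⟩ : NNReal) (subset_hull y.2)
  rw [himage]
  exact (LinearMap.isClosedEmbedding_of_injective hL).isClosedMap _ isClosed_Ici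

theorem isClosed_hull_finset (s : Finset E) : IsClosed (hull ℝ (s : Set E) : Set E) := by
  classical
  have : (hull ℝ (s : Set E) : Set E) = ⋃ t ∈ s.powerset.filter
      (fun t : Finset E => LinearIndepOn ℝ id (t : Set E)), hull ℝ (t : Set E) := by
    ext x
    simp only [SetLike.mem_coe, Set.mem_iUnion, Finset.mem_filter, Finset.mem_powerset,
      exists_prop]
    constructor
    · intro hx
      obtain ⟨t, hts, ht, hxt⟩ := exists_linearIndepOn_subset_mem_hull s hx
      exact ⟨t, ⟨hts, ht⟩, hxt⟩
    · rintro ⟨t, ⟨hts, -⟩, hxt⟩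
      exact Submodule.span_mono (by simpa using hts) hxt
  rw [this]
  exact isClosed_biUnion_finset fun t ht =>
    isClosed_hull_of_linearIndepOn (Finset.mem_filter.1 ht).2

end Module

section InnerProductSpace

variable {E : Type*} [NormedAddCommGroup E] [InnerProductSpace ℝ E] {x : E}

theorem mem_hull_finset_of_forall_mem_innerDual [FiniteDimensional ℝ E] {s : Finset E}
    (hx : ∀ y ∈ ProperCone.innerDual (s : Set E), 0 ≤ ⟪x, y⟫) :
    x ∈ hull ℝ (s : Set E) := by
  let K : ProperCone ℝ E := ⟨hull ℝ (s : Set E), isClosed_hull_finset s⟩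
  by_contra hxK
  obtain ⟨y, hyK, hxy⟩ := K.hyperplane_separation' (x₀ := x) hxK
  exact hxy.not_ge <| hx y fun p hp => hyK p (subset_hull hp)

lemma exists_mul_le_inner_of_mem_hull {s : Set E} {φ : E → ℝ}
    (hφ : ∀ p ∈ s, ∀ v, φ v ≤ ⟪p, v⟫) (hx : x ∈ hull ℝ s) :
    ∃ Λ : ℝ, 0 ≤ Λ ∧ ∀ v, Λ * φ v ≤ ⟪x, v⟫ := by
  induction hx using Submodule.span_induction with
  | mem p hp => exact ⟨1, zero_le_one, fun v => by simpa using hφ p hp v⟩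
  | zero => exact ⟨0, le_rfl, fun v => by simp⟩
  | add x y _ _ hx hy =>
    obtain ⟨Λ, hΛ, hxv⟩ := hx
    obtain ⟨M, hM, hyv⟩ := hy
    exact ⟨Λ + M, add_nonneg hΛ hM, fun v => by
      rw [inner_add_left, add_mul]; exact add_le_add (hxv v) (hyv v)⟩
  | smul c x _ hx =>
    obtain ⟨Λ, hΛ, hxv⟩ := hx
    refine ⟨c * Λ, mul_nonneg c.2 hΛ, fun v => ?_⟩
    rw [← Nonneg.coe_smul, real_inner_smul_left, mul_assoc]
    exact mul_le_mul_of_nonneg_left (hxv v) c.2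

lemma inner_eq_zero_and_inner_nonpos_of_forall_norm_sub_le (K : PointedCone ℝ E) {f u : E}
    (hu : u ∈ K) (hmin : ∀ v ∈ K, ‖u - f‖ ≤ ‖v - f‖) :
    ⟪f - u, u⟫ = 0 ∧ ∀ v ∈ K, ⟪f - u, v⟫ ≤ 0 := by
  have hvar : ∀ v ∈ K, ⟪f - u, v - u⟫ ≤ 0 := by
    refine (norm_eq_iInf_iff_real_inner_le_zero K.convex hu).1 ?_
    refine (IsMinOn.iInf_eq (f := fun v => ‖f - v‖) hu (isMinOn_iff.2 fun v hv => ?_)).symm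
    simpa only [norm_sub_rev f] using hmin v hv
  have h0 := hvar 0 K.zero_mem
  have h2 := hvar _ (K.smul_mem zero_le_two hu)
  rw [zero_sub, inner_neg_right] at h0
  rw [two_smul, add_sub_cancel_right] at h2
  have horth : ⟪f - u, u⟫ = 0 := by linarith
  refine ⟨horth, fun v hv => ?_⟩
  have := hvar v hv
  rwa [inner_sub_right, horth, sub_zero] at this

end InnerProductSpace

end PointedCone

/-- The normal cone of `convexHull s` at `q`. -/
noncomputable def normalCone {E : Type*} [NormedAddCommGroup E] [InnerProductSpace ℝ E]
    [CompleteSpace E] (s : Set E) (q : E) : ProperCone ℝ E :=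
  ProperCone.innerDual ((q - ·) '' s)

lemma ConvexOn.map_add_le_of_homogeneous {E : Type*} [AddCommGroup E] [Module ℝ E] {N : E → ℝ}
    (hN : ConvexOn ℝ Set.univ N) (N_hom : ∀ c : ℝ, 0 < c → ∀ x, N (c • x) = c * N x) (x y : E) :
    N (x + y) ≤ N x + N y := by
  have h := hN.2 (Set.mem_univ ((2 : ℝ) • x)) (Set.mem_univ ((2 : ℝ) • y))
    (by norm_num : (0 : ℝ) ≤ 1 / 2) (by norm_num : (0 : ℝ) ≤ 1 / 2) (by norm_num)
  rw [smul_smul, smul_smul, N_hom 2 two_pos, N_hom 2 two_pos] at h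
  norm_num at h
  linarith

theorem exists_linearMap_le_sublinear_eq {E : Type*} [AddCommGroup E] [Module ℝ E] {N : E → ℝ}
    (N_hom : ∀ c : ℝ, 0 < c → ∀ x, N (c • x) = c * N x) (N_add : ∀ x y, N (x + y) ≤ N x + N y)
    (x : E) : ∃ g : E →ₗ[ℝ] ℝ, (∀ y, g y ≤ N y) ∧ g x = N x := by
  have N_zero : N 0 = 0 := by linarith [show N 0 = 2 * N 0 by simpa using N_hom 2 two_pos 0]
  let f : E →ₗ.[ℝ] ℝ := LinearPMap.mkSpanSingleton' x (N x) fun c hc => by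
    rcases smul_eq_zero.1 hc with rfl | rfl <;> simp [N_zero]
  have hf : ∀ y : f.domain, f y ≤ N y := by
    rintro ⟨y, hy⟩
    obtain ⟨c, rfl⟩ := Submodule.mem_span_singleton.1 hy
    rw [LinearPMap.mkSpanSingleton'_apply, RingHom.id_apply, smul_eq_mul]
    rcases lt_trichotomy c 0 with hc | rfl | hc
    · have := N_add (c • x) ((-c) • x)
      rw [← add_smul, add_neg_cancel, zero_smul, N_zero, N_hom (-c) (neg_pos.2 hc)] at this
      linarith
    · simp [N_zero]
    · exact (N_hom c hc x).ge
  obtain ⟨g, hgf, hgN⟩ := exists_extension_of_le_sublinear f N N_hom N_add hf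
  exact ⟨g, hgN, (hgf ⟨x, Submodule.mem_span_singleton_self x⟩).trans
    (LinearPMap.mkSpanSingleton'_apply_self _ _ _ _)⟩

section Subdifferential

variable {n : ℕ} {J : EuclideanSpace ℝ (Fin n) → ℝ} {p q u : EuclideanSpace ℝ (Fin n)}

lemma mem_subdiff_zero_iff (hJ0 : J 0 = 0) : p ∈ subdiff J 0 ↔ ∀ v, ⟪p, v⟫ ≤ J v := by
  simp [subdiff, hJ0]

lemma mem_subdiff_iff_le_inner (hJ0 : J 0 = 0) (hp : p ∈ subdiff J 0) :
    p ∈ subdiff J u ↔ J u ≤ ⟪p, u⟫ := by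
  constructor
  · intro h
    have := h 0
    rw [hJ0, zero_sub, inner_neg_right] at this
    linarith
  · intro h v
    rw [inner_sub_right]
    linarith [(mem_subdiff_zero_iff hJ0).1 hp v]

lemma exists_mem_subdiff_zero_inner_eq (hconv : ConvexOn ℝ Set.univ J)
    (hhom : ∀ (s : ℝ) (u : EuclideanSpace ℝ (Fin n)), J (s • u) = |s| * J u)
    (v : EuclideanSpace ℝ (Fin n)) : ∃ p ∈ subdiff J 0, ⟪p, v⟫ = J v := by
  have hpos : ∀ c : ℝ, 0 < c → ∀ x, J (c • x) = c * J x := fun c hc x => by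
    rw [hhom, abs_of_pos hc]
  obtain ⟨g, hgJ, hgv⟩ :=
    exists_linearMap_le_sublinear_eq hpos (hconv.map_add_le_of_homogeneous hpos) v
  let p := (InnerProductSpace.toDual ℝ _).symm (LinearMap.toContinuousLinearMap g)
  have hp : ∀ w, ⟪p, w⟫ = g w := fun w => by simp [p, InnerProductSpace.toDual_symm_apply]
  exact ⟨p, (mem_subdiff_zero_iff (by simpa using hhom 0 0)).2 fun w => hp w ▸ hgJ w, hp v ▸ hgv⟩

theorem setOf_mem_subdiff_eq_normalCone (hconv : ConvexOn ℝ Set.univ J)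
    (hhom : ∀ (s : ℝ) (u : EuclideanSpace ℝ (Fin n)), J (s • u) = |s| * J u)
    {s : Set (EuclideanSpace ℝ (Fin n))} (hs : convexHull ℝ s = subdiff J 0)
    (hq : q ∈ subdiff J 0) :
    {v | q ∈ subdiff J v} = normalCone s q := by
  have hJ0 : J 0 = 0 := by simpa using hhom 0 0
  ext v
  simp only [normalCone, Set.mem_ofPred_eq, SetLike.mem_coe, ProperCone.mem_innerDual,
    Set.forall_mem_image, inner_sub_left, sub_nonneg, mem_subdiff_iff_le_inner hJ0 hq]
  constructor
  · intro h p hp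
    exact ((mem_subdiff_zero_iff hJ0).1 (hs ▸ subset_convexHull ℝ s hp) v).trans h
  · intro h
    obtain ⟨p, hp, hpv⟩ := exists_mem_subdiff_zero_inner_eq hconv hhom v
    have hhalf : convexHull ℝ s ⊆ {x | ⟪x, v⟫ ≤ ⟪q, v⟫} := by
      refine convexHull_min (fun p hp => h hp) ?_
      exact convex_halfSpace_le
        ⟨fun a b => inner_add_left a b v, fun c a => real_inner_smul_left a v c⟩ _
    exact hpv ▸ hhalf (hs ▸ hp)

lemma exists_inner_le_mul_of_forall_mem_normalCone
    (hJ0 : J 0 = 0) {F : Finset (EuclideanSpace ℝ (Fin n))} (hF : (F : Set _) ⊆ subdiff J 0)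
    {w : EuclideanSpace ℝ (Fin n)} (hw : ∀ v ∈ normalCone ↑F q, ⟪w, v⟫ ≤ 0) :
    ∃ Λ : ℝ, 0 ≤ Λ ∧ ∀ v, ⟪w, v⟫ ≤ Λ * (J v - ⟪q, v⟫) := by
  classical
  have hmem := PointedCone.mem_hull_finset_of_forall_mem_innerDual (x := -w)
    (s := F.image (q - ·)) fun v hv => by
      rw [Finset.coe_image] at hv
      simpa [inner_neg_left] using hw v hv
  have hgen : ∀ p ∈ ((F.image (q - ·) : Finset _) : Set (EuclideanSpace ℝ (Fin n))), ∀ v,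
      ⟪q, v⟫ - J v ≤ ⟪p, v⟫ := by
    simp only [Finset.coe_image, Set.forall_mem_image, inner_sub_left]
    exact fun p hp v => by linarith [(mem_subdiff_zero_iff hJ0).1 (hF hp) v]
  obtain ⟨Λ, hΛ, hbound⟩ := PointedCone.exists_mul_le_inner_of_mem_hull hgen hmem
  refine ⟨Λ, hΛ, fun v => ?_⟩
  have := hbound v
  rw [inner_neg_left] at this
  linarith

lemma add_smul_mem_subdiff_zero (hJ0 : J 0 = 0) (hq : q ∈ subdiff J 0)
    {w : EuclideanSpace ℝ (Fin n)} {Λ : ℝ} (hΛ : 0 ≤ Λ)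
    (hw : ∀ v, ⟪w, v⟫ ≤ Λ * (J v - ⟪q, v⟫)) {s : ℝ} (hs : s ∈ Set.Icc 0 (Λ + 1)⁻¹) :
    q + s • w ∈ subdiff J 0 := by
  rw [mem_subdiff_zero_iff hJ0] at hq ⊢
  intro v
  have hgap : 0 ≤ J v - ⟪q, v⟫ := sub_nonneg.2 (hq v)
  have hsΛ : s * Λ ≤ 1 := by
    have : (Λ + 1)⁻¹ * Λ ≤ 1 := by rw [inv_mul_le_iff₀ (by linarith)]; linarith
    linarith [mul_le_mul_of_nonneg_right hs.2 hΛ]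
  have : s * ⟪w, v⟫ ≤ J v - ⟪q, v⟫ := calc
    s * ⟪w, v⟫ ≤ s * (Λ * (J v - ⟪q, v⟫)) := mul_le_mul_of_nonneg_left (hw v) hs.1
    _ = (s * Λ) * (J v - ⟪q, v⟫) := by ring
    _ ≤ J v - ⟪q, v⟫ := mul_le_of_le_one_left hgap hsΛ
  rw [inner_add_left, real_inner_smul_left]
  linarith

end Subdifferential

/-- piecewise dynamics of the inverse scale space flow, key step:
for polyhedral `J` and `q₀ ∈ ∂J(0)`, the set `C = {v | q₀ ∈ ∂J(v)}` is nonempty,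
closed and convex, and if `vhat` is the element of `C` closest to `f`, then there
is `δ > 0` with `q₀ + s • (f - vhat) ∈ ∂J(vhat)` for all `s ∈ [0, δ]`. -/
theorem inverse_scale_space_piecewise_step {n : ℕ}
    (J : EuclideanSpace ℝ (Fin n) → ℝ)
    (hconv : ConvexOn ℝ Set.univ J)
    (hhom : ∀ (s : ℝ) (u : EuclideanSpace ℝ (Fin n)), J (s • u) = |s| * J u)
    (hPS : ∃ F : Finset (EuclideanSpace ℝ (Fin n)),
      convexHull ℝ (F : Set (EuclideanSpace ℝ (Fin n))) = subdiff J 0)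
    (f q₀ : EuclideanSpace ℝ (Fin n))
    (hq₀ : q₀ ∈ subdiff J 0)
    (vhat : EuclideanSpace ℝ (Fin n))
    (hvhat : vhat ∈ {v : EuclideanSpace ℝ (Fin n) | q₀ ∈ subdiff J v})
    (hclosest : ∀ v ∈ {v : EuclideanSpace ℝ (Fin n) | q₀ ∈ subdiff J v},
      ‖vhat - f‖ ≤ ‖v - f‖) :
    ({v : EuclideanSpace ℝ (Fin n) | q₀ ∈ subdiff J v}).Nonempty ∧
    IsClosed {v : EuclideanSpace ℝ (Fin n) | q₀ ∈ subdiff J v} ∧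
    Convex ℝ {v : EuclideanSpace ℝ (Fin n) | q₀ ∈ subdiff J v} ∧
    ∃ δ : ℝ, 0 < δ ∧ ∀ s ∈ Set.Icc (0 : ℝ) δ,
      q₀ + s • (f - vhat) ∈ subdiff J vhat := by
  obtain ⟨F, hF⟩ := hPS
  have hJ0 : J 0 = 0 := by simpa using hhom 0 0
  have hJvhat : J vhat ≤ ⟪q₀, vhat⟫ := (mem_subdiff_iff_le_inner hJ0 hq₀).1 hvhat
  rw [setOf_mem_subdiff_eq_normalCone hconv hhom hF hq₀] at hvhat hclosest ⊢
  set C := normalCone (F : Set (EuclideanSpace ℝ (Fin n))) q₀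
  obtain ⟨horth, hpolar⟩ :=
    PointedCone.inner_eq_zero_and_inner_nonpos_of_forall_norm_sub_le (C : PointedCone ℝ _)
      hvhat fun v hv => hclosest v hv
  obtain ⟨Λ, hΛ, hw⟩ :=
    exists_inner_le_mul_of_forall_mem_normalCone hJ0 (hF ▸ subset_convexHull ℝ _) hpolar
  refine ⟨⟨vhat, hvhat⟩, C.isClosed, C.convex, (Λ + 1)⁻¹, by positivity, fun s hs => ?_⟩
  rw [mem_subdiff_iff_le_inner hJ0 (add_smul_mem_subdiff_zero hJ0 hq₀ hΛ hw hs), inner_add_left,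
    real_inner_smul_left, horth, mul_zero, add_zero]
  exact hJvhat
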